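/- Let A be the Cartan matrix of a complex semisimple Lie algebra of rank r, let I = (i_1,…,i_n) be a word with entries in {1,…,r}, and let λ = (λ_1,…,λ_r) be a dominant weight. Let (C(c,ℓ), ρ) be the associated Grossberg–Karshon twisted cube (c_{jk} = A_{i_j i_k}, ℓ_j = λ_{i_j}). If (C(c,ℓ), ρ) is twisted, then there exists a subword (i_{j_0}, i_{j_1}, …, i_{j_s}) of I which is a hesitant λ-walk. Equivalently, if I is hesitant-λ-walk-avoiding then (C(c,ℓ), ρ) is untwisted. -/

import Mathlib

/-! Call a position `q` of the word dead if no `λ`-walk subword starts at `q`. On the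
nonnegative branch a dead position has `x_q = 0`, by downward induction: `ℓ_q = 0`, and every
later position `m` with `c_{qm} ≠ 0` carries the same or an adjacent letter, so it is dead too.
If the word avoids hesitant `λ`-walks, every later repetition of the letter at `q` is dead, so
in `A_q(x) = ℓ_q − Σ_{m>q} c_{qm} x_m` only nonpositive off-diagonal entries survive and
`A_q(x) ≥ 0`. Hence the negative branch never occurs: the cube is the polytope
`0 ≤ x_j ≤ A_j(x)`, on which `ρ ≡ 1`, and it is a convex hull of finitely many points because
each coordinate ranges between `0` and an affine function of the later ones. -/

open Finset

/-- `A_j(x) = ℓ_j − Σ_{k>j} c_{jk} x_k` (for the last index the sum is empty). -/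
noncomputable def GKA {n : ℕ} (c : Fin n → Fin n → ℤ) (ℓ : Fin n → ℤ)
    (j : Fin n) (x : Fin n → ℝ) : ℝ :=
  (ℓ j : ℝ) - ∑ k ∈ Finset.univ.filter (fun k : Fin n => j < k), (c j k : ℝ) * x k

/-- The Grossberg–Karshon twisted cube `C(c,ℓ)`. -/
noncomputable def GKcube {n : ℕ} (c : Fin n → Fin n → ℤ) (ℓ : Fin n → ℤ) :
    Set (Fin n → ℝ) :=
  {x | ∀ j : Fin n, (GKA c ℓ j x < x j ∧ x j < 0) ∨ (0 ≤ x j ∧ x j ≤ GKA c ℓ j x)}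

/-- `sgn(t) = 1` for `t < 0` and `−1` for `t ≥ 0`. -/
noncomputable def GKsgn (t : ℝ) : ℝ := if t < 0 then 1 else -1

open Classical in
/-- The density function `ρ`: `ρ(x) = (−1)^n ∏_k sgn(x_k)` on `C(c,ℓ)`, `0` elsewhere. -/
noncomputable def GKrho {n : ℕ} (c : Fin n → Fin n → ℤ) (ℓ : Fin n → ℤ)
    (x : Fin n → ℝ) : ℝ :=
  if x ∈ GKcube c ℓ then (-1 : ℝ) ^ n * ∏ k : Fin n, GKsgn (x k) else 0

/-- `(C(c,ℓ), ρ)` is untwisted: `C(c,ℓ)` is closed, convex, the convex hull of a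
finite set, and `ρ ≡ 1` on `C(c,ℓ)`.  "Twisted" is the negation of this. -/
noncomputable def GKUntwisted {n : ℕ} (c : Fin n → Fin n → ℤ) (ℓ : Fin n → ℤ) : Prop :=
  IsClosed (GKcube c ℓ) ∧ Convex ℝ (GKcube c ℓ) ∧
  (∃ S : Finset (Fin n → ℝ), GKcube c ℓ = convexHull ℝ (S : Set (Fin n → ℝ))) ∧
  (∀ x ∈ GKcube c ℓ, GKrho c ℓ x = 1)

/-- The Cartier data `m_σ`, defined by downward recursion:
`m_{σ,k} = 0` if `σ_k = +` (encoded `false`), and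
`m_{σ,k} = ℓ_k − Σ_{s>k} c_{ks} m_{σ,s}` if `σ_k = −` (encoded `true`). -/
def GKm {n : ℕ} (c : Fin n → Fin n → ℤ) (ℓ : Fin n → ℤ) (σ : Fin n → Bool)
    (k : Fin n) : ℤ :=
  if σ k then
    ℓ k - ∑ s ∈ (Finset.univ.filter fun s : Fin n => k < s).attach,
      c k s.1 * GKm c ℓ σ s.1
  else 0
termination_by n - k.val
decreasing_by
  have h := s.2
  simp only [Finset.mem_filter, Finset.mem_univ, true_and, Fin.lt_def] at h
  omega

/-- `A` is the Cartan matrix of a complex semisimple Lie algebra of rank `r`,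
i.e. a generalized Cartan matrix of finite type: diagonal entries `2`,
nonpositive off-diagonal entries, `A_{ab} = 0 ↔ A_{ba} = 0`, and `A` is
symmetrizable by positive rationals `d_a` with `(d_a A_{ab})` symmetric
positive definite. -/
def IsCartanMatrix {r : ℕ} (A : Matrix (Fin r) (Fin r) ℤ) : Prop :=
  (∀ a, A a a = 2) ∧
  (∀ a b, a ≠ b → A a b ≤ 0) ∧
  (∀ a b, A a b = 0 ↔ A b a = 0) ∧
  (∃ d : Fin r → ℚ, (∀ a, 0 < d a) ∧
    (∀ a b, d a * (A a b : ℚ) = d b * (A b a : ℚ)) ∧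
    (∀ x : Fin r → ℚ, x ≠ 0 → 0 < ∑ a, ∑ b, x a * d a * (A a b : ℚ) * x b))

/-- `(w_0, …, w_s)` is a diagram walk followed by the condition that the final
root appears in `λ`: a `λ`-walk.  (Successive entries are distinct and adjacent
in the Dynkin diagram, and `λ_{w_s} > 0`.) -/
def IsLambdaWalkSeq {r : ℕ} (A : Matrix (Fin r) (Fin r) ℤ) (lam : Fin r → ℤ)
    {s : ℕ} (w : Fin (s + 1) → Fin r) : Prop :=
  (∀ t : Fin s, w t.castSucc ≠ w t.succ ∧ A (w t.castSucc) (w t.succ) < 0) ∧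
  0 < lam (w (Fin.last s))

/-- `(w_0, w_1, …, w_s)` is a hesitant `λ`-walk: `s ≥ 1`, `w_0 = w_1`, the
walking component `(w_1, …, w_s)` is a diagram walk, and `λ_{w_s} > 0`. -/
def IsHesitantLambdaWalkSeq {r : ℕ} (A : Matrix (Fin r) (Fin r) ℤ)
    (lam : Fin r → ℤ) {s : ℕ} (w : Fin (s + 1) → Fin r) : Prop :=
  1 ≤ s ∧ w 0 = w 1 ∧
  (∀ t : Fin s, 1 ≤ t.val →
    (w t.castSucc ≠ w t.succ ∧ A (w t.castSucc) (w t.succ) < 0)) ∧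
  0 < lam (w (Fin.last s))

/-- The word `i = (i_1, …, i_n)` is hesitant-`λ`-walk-avoiding: no subword
(subsequence, given by a strictly increasing reindexing `j`) is a hesitant
`λ`-walk. -/
def HesitantLambdaWalkAvoiding {r n : ℕ} (A : Matrix (Fin r) (Fin r) ℤ)
    (lam : Fin r → ℤ) (i : Fin n → Fin r) : Prop :=
  ¬ ∃ (s : ℕ) (j : Fin (s + 1) → Fin n), StrictMono j ∧
      IsHesitantLambdaWalkSeq A lam (i ∘ j)

/-- Minimality of a hesitant `λ`-walk `(w_0, …, w_s)`: the entries of the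
walking component `w_1, …, w_s` are pairwise distinct, and if `s ≥ 2` then
`λ_{w_t} = 0` for `0 ≤ t ≤ s − 1`. -/
def MinimalHLW {r s : ℕ} (lam : Fin r → ℤ) (w : Fin (s + 1) → Fin r) : Prop :=
  (∀ p q : Fin (s + 1), 1 ≤ p.val → 1 ≤ q.val → w p = w q → p = q) ∧
  (2 ≤ s → ∀ t : Fin (s + 1), t.val ≤ s - 1 → lam (w t) = 0)


section ConvexStacking

variable {n : ℕ}

theorem Fin.cons_mem_segment {𝕜 E : Type*} [Ring 𝕜] [PartialOrder 𝕜] [AddCommGroup E]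
    [Module 𝕜 E] {a b t : E} (z : Fin n → E) (ht : t ∈ segment 𝕜 a b) :
    (Fin.cons t z : Fin (n + 1) → E) ∈
      segment 𝕜 (Fin.cons a z : Fin (n + 1) → E) (Fin.cons b z) := by
  obtain ⟨p, q, hp, hq, hpq, rfl⟩ := ht
  refine ⟨p, q, hp, hq, hpq, funext fun j => Fin.cases ?_ (fun k => ?_) j⟩
  · simp
  · simp [← add_smul, hpq]

noncomputable def consAffineMap (g : (Fin n → ℝ) →ᵃ[ℝ] ℝ) :
    (Fin n → ℝ) →ᵃ[ℝ] (Fin (n + 1) → ℝ) :=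
  AffineMap.pi (Fin.cons g fun k => (LinearMap.proj k : (Fin n → ℝ) →ₗ[ℝ] ℝ).toAffineMap)

@[simp]
theorem consAffineMap_apply (g : (Fin n → ℝ) →ᵃ[ℝ] ℝ) (z : Fin n → ℝ) :
    consAffineMap g z = Fin.cons (g z) z :=
  funext fun j => Fin.cases rfl (fun _ => rfl) j

theorem mem_convexHull_image_of_mem_convexHull {E F : Type*} [AddCommGroup E] [Module ℝ E]
    [AddCommGroup F] [Module ℝ F] (f : E →ᵃ[ℝ] F) {s : Set E} {z : E} (hz : z ∈ convexHull ℝ s) :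
    f z ∈ convexHull ℝ (f '' s) :=
  f.image_convexHull s ▸ Set.mem_image_of_mem f hz

theorem convex_setOf_tail_mem_and_mem_Icc {K : Set (Fin n → ℝ)} (hK : Convex ℝ K)
    (g : (Fin n → ℝ) →ᵃ[ℝ] ℝ) :
    Convex ℝ {y : Fin (n + 1) → ℝ | Fin.tail y ∈ K ∧ y 0 ∈ Set.Icc 0 (g (Fin.tail y))} := by
  rintro x ⟨hxK, hx0, hxg⟩ y ⟨hyK, hy0, hyg⟩ a b ha hb hab
  have htail : Fin.tail (a • x + b • y) = a • Fin.tail x + b • Fin.tail y := rfl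
  simp only [Set.mem_ofPred_eq, Set.mem_Icc, htail, Convex.combo_affine_apply hab, Pi.add_apply,
    Pi.smul_apply, smul_eq_mul]
  exact ⟨hK hxK hyK ha hb hab, by positivity,
    add_le_add (mul_le_mul_of_nonneg_left hxg ha) (mul_le_mul_of_nonneg_left hyg hb)⟩

/-- Over `convexHull S`, the region between the graphs of `0` and of an affine function that is
nonnegative there is the convex hull of the points of both graphs over `S`. -/
theorem exists_finset_setOf_tail_mem_and_mem_Icc_eq_convexHull (S : Finset (Fin n → ℝ))
    (g : (Fin n → ℝ) →ᵃ[ℝ] ℝ) (hg : ∀ z ∈ convexHull ℝ (S : Set (Fin n → ℝ)), 0 ≤ g z) :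
    ∃ T : Finset (Fin (n + 1) → ℝ),
      {y : Fin (n + 1) → ℝ | Fin.tail y ∈ convexHull ℝ (S : Set (Fin n → ℝ)) ∧
        y 0 ∈ Set.Icc 0 (g (Fin.tail y))} = convexHull ℝ (T : Set (Fin (n + 1) → ℝ)) := by
  classical
  set f₀ := consAffineMap (0 : (Fin n → ℝ) →ᵃ[ℝ] ℝ)
  set f₁ := consAffineMap g
  refine ⟨S.image f₀ ∪ S.image f₁, Set.Subset.antisymm ?_ ?_⟩
  · rintro y ⟨hz, hy0⟩
    have hy : y 0 ∈ segment ℝ 0 (g (Fin.tail y)) := by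
      rwa [segment_eq_Icc (hy0.1.trans hy0.2)]
    refine (convex_convexHull ℝ _).segment_subset
      (convexHull_mono ?_ (mem_convexHull_image_of_mem_convexHull f₀ hz))
      (convexHull_mono ?_ (mem_convexHull_image_of_mem_convexHull f₁ hz)) ?_
    · simp [Finset.coe_union]
    · simp [Finset.coe_union]
    · simpa [f₀, f₁] using Fin.cons_mem_segment (Fin.tail y) hy
  · refine convexHull_min ?_ (convex_setOf_tail_mem_and_mem_Icc (convex_convexHull ℝ _) g)
    have hS : ∀ z ∈ S, z ∈ convexHull ℝ (S : Set (Fin n → ℝ)) := fun z hz =>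
      subset_convexHull ℝ _ hz
    simp only [Finset.coe_union, Finset.coe_image, Set.union_subset_iff, Set.image_subset_iff]
    constructor <;> intro z hz <;> simp [f₀, f₁, hS z hz, hg z (hS z hz)]

end ConvexStacking

section Polytope

variable {n : ℕ}

noncomputable def gkaAffineMap (c : Fin n → Fin n → ℤ) (ℓ : Fin n → ℤ) (j : Fin n) :
    (Fin n → ℝ) →ᵃ[ℝ] ℝ :=
  AffineMap.const ℝ (Fin n → ℝ) (ℓ j : ℝ) -
    (∑ k ∈ Finset.univ.filter (fun k : Fin n => j < k),
      (c j k : ℝ) • (LinearMap.proj k : (Fin n → ℝ) →ₗ[ℝ] ℝ)).toAffineMap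

@[simp]
theorem coe_gkaAffineMap (c : Fin n → Fin n → ℤ) (ℓ : Fin n → ℤ) (j : Fin n) :
    ⇑(gkaAffineMap c ℓ j) = GKA c ℓ j := by
  funext x
  simp [gkaAffineMap, GKA]

theorem GKA_congr {c : Fin n → Fin n → ℤ} {ℓ : Fin n → ℤ} {j : Fin n} {x y : Fin n → ℝ}
    (h : ∀ k, j < k → x k = y k) : GKA c ℓ j x = GKA c ℓ j y := by
  unfold GKA
  congr 1
  exact Finset.sum_congr rfl fun k hk => by rw [h k (Finset.mem_filter.1 hk).2]

theorem GKA_succ (c : Fin (n + 1) → Fin (n + 1) → ℤ) (ℓ : Fin (n + 1) → ℤ)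
    (y : Fin (n + 1) → ℝ) (j : Fin n) :
    GKA c ℓ j.succ y = GKA (fun a b => c a.succ b.succ) (fun a => ℓ a.succ) j (Fin.tail y) := by
  simp only [GKA, Finset.sum_filter, Fin.sum_univ_succ, Fin.succ_lt_succ_iff,
    Fin.not_lt_zero, if_false, zero_add, Fin.tail]

theorem GKA_zero_eq_cons_zero_tail (c : Fin (n + 1) → Fin (n + 1) → ℤ) (ℓ : Fin (n + 1) → ℤ)
    (y : Fin (n + 1) → ℝ) : GKA c ℓ 0 y = GKA c ℓ 0 (Fin.cons 0 (Fin.tail y)) :=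
  GKA_congr fun k hk => by
    obtain ⟨k, rfl⟩ := Fin.eq_succ_of_ne_zero hk.ne'
    rfl

def gkPolytope (c : Fin n → Fin n → ℤ) (ℓ : Fin n → ℤ) : Set (Fin n → ℝ) :=
  {x | ∀ j, x j ∈ Set.Icc 0 (GKA c ℓ j x)}

theorem mem_gkPolytope_succ_iff (c : Fin (n + 1) → Fin (n + 1) → ℤ) (ℓ : Fin (n + 1) → ℤ)
    (y : Fin (n + 1) → ℝ) :
    y ∈ gkPolytope c ℓ ↔
      Fin.tail y ∈ gkPolytope (fun a b => c a.succ b.succ) (fun a => ℓ a.succ) ∧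
        y 0 ∈ Set.Icc 0 (GKA c ℓ 0 (Fin.cons 0 (Fin.tail y))) := by
  simp only [gkPolytope, Set.mem_ofPred_eq, Fin.forall_fin_succ, GKA_succ,
    ← GKA_zero_eq_cons_zero_tail, and_comm]
  rfl

/-- The condition under which the negative branch in the definition of `GKcube` never occurs. -/
def GKANonneg (c : Fin n → Fin n → ℤ) (ℓ : Fin n → ℤ) : Prop :=
  ∀ (x : Fin n → ℝ) (q : Fin n), (∀ m, q < m → x m ∈ Set.Icc 0 (GKA c ℓ m x)) →
    0 ≤ GKA c ℓ q x

namespace GKANonneg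

theorem tail {c : Fin (n + 1) → Fin (n + 1) → ℤ} {ℓ : Fin (n + 1) → ℤ} (h : GKANonneg c ℓ) :
    GKANonneg (fun a b => c a.succ b.succ) (fun a => ℓ a.succ) := by
  intro x q hx
  simpa [GKA_succ] using h (Fin.cons 0 x) q.succ fun m hm => by
    obtain ⟨m, rfl⟩ := Fin.eq_succ_of_ne_zero ((Fin.succ_pos q).trans hm).ne'
    simpa [GKA_succ] using hx m (Fin.succ_lt_succ_iff.1 hm)

theorem GKcube_eq_gkPolytope {c : Fin n → Fin n → ℤ} {ℓ : Fin n → ℤ} (h : GKANonneg c ℓ) :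
    GKcube c ℓ = gkPolytope c ℓ := by
  refine Set.Subset.antisymm (fun x hx q => ?_) fun x hx q => .inr (hx q)
  induction q using WellFoundedGT.induction with
  | _ q ih => exact (hx q).resolve_left fun hneg => (h x q ih).not_gt (hneg.1.trans hneg.2)

theorem exists_finset_gkPolytope_eq_convexHull :
    ∀ {n : ℕ} {c : Fin n → Fin n → ℤ} {ℓ : Fin n → ℤ}, GKANonneg c ℓ →
      ∃ T : Finset (Fin n → ℝ), gkPolytope c ℓ = convexHull ℝ (T : Set (Fin n → ℝ))
  | 0, c, ℓ, _ => ⟨{0}, by ext x; simp [gkPolytope, Subsingleton.elim x 0]⟩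
  | n + 1, c, ℓ, h => by
    obtain ⟨S, hS⟩ := h.tail.exists_finset_gkPolytope_eq_convexHull
    set g := (gkaAffineMap c ℓ 0).comp (consAffineMap 0)
    have hg : ∀ z ∈ convexHull ℝ (S : Set (Fin n → ℝ)), 0 ≤ g z := by
      rw [← hS]
      intro z hz
      simpa [g] using h (Fin.cons 0 z) 0 fun m hm => by
        obtain ⟨m, rfl⟩ := Fin.eq_succ_of_ne_zero hm.ne'
        simpa [GKA_succ] using hz m
    obtain ⟨T, hT⟩ := exists_finset_setOf_tail_mem_and_mem_Icc_eq_convexHull S g hg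
    refine ⟨T, hT ▸ Set.ext fun y => ?_⟩
    rw [mem_gkPolytope_succ_iff, hS]
    simp [g]

end GKANonneg

theorem GKrho_eq_one_of_nonneg {c : Fin n → Fin n → ℤ} {ℓ : Fin n → ℤ} {x : Fin n → ℝ}
    (hx : x ∈ GKcube c ℓ) (hnn : ∀ k, 0 ≤ x k) : GKrho c ℓ x = 1 := by
  simp [GKrho, hx, GKsgn, not_lt.2 (hnn _), ← mul_pow]

theorem GKANonneg.gkUntwisted {c : Fin n → Fin n → ℤ} {ℓ : Fin n → ℤ} (h : GKANonneg c ℓ) :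
    GKUntwisted c ℓ := by
  obtain ⟨T, hT⟩ := h.exists_finset_gkPolytope_eq_convexHull
  have hcube := h.GKcube_eq_gkPolytope.trans hT
  refine ⟨hcube ▸ (T.finite_toSet.isCompact_convexHull (𝕜 := ℝ)).isClosed,
    hcube ▸ convex_convexHull ℝ _, ⟨T, hcube⟩, fun x hx => GKrho_eq_one_of_nonneg hx fun k => ?_⟩
  exact ((h.GKcube_eq_gkPolytope ▸ hx : x ∈ gkPolytope c ℓ) k).1

end Polytope

section Walks

variable {r n : ℕ} {A : Matrix (Fin r) (Fin r) ℤ} {lam : Fin r → ℤ}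

theorem IsLambdaWalkSeq.cons {s : ℕ} {w : Fin (s + 1) → Fin r} {a : Fin r}
    (hw : IsLambdaWalkSeq A lam w) (hne : a ≠ w 0) (hadj : A a (w 0) < 0) :
    IsLambdaWalkSeq A lam (Fin.cons a w : Fin (s + 2) → Fin r) := by
  refine ⟨fun t => ?_, by simpa [← Fin.succ_last] using hw.2⟩
  induction t using Fin.cases with
  | zero => exact ⟨hne, hadj⟩
  | succ t => simpa [← Fin.succ_castSucc] using hw.1 t

theorem IsLambdaWalkSeq.isHesitantLambdaWalkSeq_cons {s : ℕ} {w : Fin (s + 1) → Fin r}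
    (hw : IsLambdaWalkSeq A lam w) :
    IsHesitantLambdaWalkSeq A lam (Fin.cons (w 0) w : Fin (s + 2) → Fin r) := by
  refine ⟨by omega, rfl, fun t ht => ?_, by simpa [← Fin.succ_last] using hw.2⟩
  obtain ⟨t, rfl⟩ := Fin.eq_succ_of_ne_zero (Fin.pos_iff_ne_zero.1 ht)
  simpa [← Fin.succ_castSucc] using hw.1 t

def IsLambdaWalkStart (A : Matrix (Fin r) (Fin r) ℤ) (lam : Fin r → ℤ) (i : Fin n → Fin r)
    (q : Fin n) : Prop :=
  ∃ (s : ℕ) (w : Fin (s + 1) → Fin n), StrictMono w ∧ w 0 = q ∧ IsLambdaWalkSeq A lam (i ∘ w)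

variable {i : Fin n → Fin r} {q m : Fin n}

theorem isLambdaWalkStart_of_pos (h : 0 < lam (i q)) : IsLambdaWalkStart A lam i q :=
  ⟨0, fun _ => q, Subsingleton.strictMono (α := Fin 1) _, rfl, fun t => t.elim0, h⟩

theorem IsLambdaWalkStart.of_lt (hoff : ∀ a b, a ≠ b → A a b ≤ 0) (hqm : q < m)
    (hc : A (i q) (i m) ≠ 0) (h : IsLambdaWalkStart A lam i m) : IsLambdaWalkStart A lam i q := by
  obtain ⟨s, w, hmono, rfl, hw⟩ := h
  by_cases heq : i q = i (w 0)
  · refine ⟨s, Fin.cons q (Fin.tail w), Fin.strictMono_cons.2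
      ⟨fun j => hqm.trans (hmono (Fin.succ_pos j)), hmono.comp (Fin.strictMono_succ)⟩, rfl, ?_⟩
    convert hw using 1
    rw [Fin.comp_cons, heq]
    exact Fin.cons_self_tail (i ∘ w)
  · refine ⟨s + 1, Fin.cons q w, hmono.vecCons hqm, rfl, ?_⟩
    rw [Fin.comp_cons]
    exact hw.cons heq (lt_of_le_of_ne (hoff _ _ heq) hc)

theorem IsLambdaWalkStart.not_hesitantLambdaWalkAvoiding {p : Fin n} (hpq : p < q)
    (heq : i p = i q) (h : IsLambdaWalkStart A lam i q) : ¬ HesitantLambdaWalkAvoiding A lam i := by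
  obtain ⟨s, w, hmono, rfl, hw⟩ := h
  refine not_not.2 ⟨s + 1, Fin.cons p w, hmono.vecCons hpq, ?_⟩
  rw [Fin.comp_cons, heq]
  exact hw.isHesitantLambdaWalkSeq_cons

theorem eq_zero_of_not_isLambdaWalkStart (hoff : ∀ a b, a ≠ b → A a b ≤ 0) {x : Fin n → ℝ}
    (q : Fin n)
    (hx : ∀ m, q ≤ m → x m ∈ Set.Icc 0 (GKA (fun j k => A (i j) (i k)) (fun j => lam (i j)) m x))
    (hq : ¬ IsLambdaWalkStart A lam i q) : x q = 0 := by
  induction q using WellFoundedGT.induction with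
  | _ q ih =>
    have hsum : ∑ m ∈ Finset.univ.filter (fun m : Fin n => q < m),
        (A (i q) (i m) : ℝ) * x m = 0 := Finset.sum_eq_zero fun m hm => by
      have hqm := (Finset.mem_filter.1 hm).2
      by_cases hc : A (i q) (i m) = 0
      · simp [hc]
      · rw [ih m hqm (fun m' hm' => hx m' (hqm.le.trans hm')) fun h => hq (h.of_lt hoff hqm hc),
          mul_zero]
    have hlam : (lam (i q) : ℝ) ≤ 0 := by
      exact_mod_cast not_lt.1 fun h => hq (isLambdaWalkStart_of_pos h)
    have hxq := hx q le_rfl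
    simp only [GKA, hsum, sub_zero] at hxq
    exact le_antisymm (hxq.2.trans hlam) hxq.1

theorem HesitantLambdaWalkAvoiding.gkaNonneg (hoff : ∀ a b, a ≠ b → A a b ≤ 0)
    (hlam : ∀ a, 0 ≤ lam a) (hav : HesitantLambdaWalkAvoiding A lam i) :
    GKANonneg (fun j k => A (i j) (i k)) (fun j => lam (i j)) := by
  intro x q hx
  have hsum : ∑ m ∈ Finset.univ.filter (fun m : Fin n => q < m),
      (A (i q) (i m) : ℝ) * x m ≤ 0 := Finset.sum_nonpos fun m hm => by
    have hqm := (Finset.mem_filter.1 hm).2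
    by_cases heq : i q = i m
    · rw [eq_zero_of_not_isLambdaWalkStart hoff m (fun m' hm' => hx m' (hqm.trans_le hm'))
        fun h => h.not_hesitantLambdaWalkAvoiding hqm heq hav, mul_zero]
    · exact mul_nonpos_of_nonpos_of_nonneg (by exact_mod_cast hoff _ _ heq) (hx m hqm).1
  have hlamq : (0 : ℝ) ≤ lam (i q) := by exact_mod_cast hlam _
  simp only [GKA]
  linarith

end Walks

/-- "only if" direction.  With `A` a Cartan matrix, `i` a
word, `λ` dominant, `c_{jk} = A_{i_j i_k}`, `ℓ_j = λ_{i_j}`: if the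
Grossberg–Karshon twisted cube is twisted, then some subword of `i` is a
hesitant `λ`-walk. -/
theorem statement6 {r n : ℕ} (A : Matrix (Fin r) (Fin r) ℤ)
    (hA : IsCartanMatrix A) (lam : Fin r → ℤ) (hlam : ∀ a, 0 ≤ lam a)
    (i : Fin n → Fin r)
    (htw : ¬ GKUntwisted (fun j k => A (i j) (i k)) (fun j => lam (i j))) :
    ∃ (s : ℕ) (j : Fin (s + 1) → Fin n), StrictMono j ∧
      IsHesitantLambdaWalkSeq A lam (i ∘ j) := by
  by_contra hav
  exact htw (HesitantLambdaWalkAvoiding.gkaNonneg hA.2.1 hlam hav).gkUntwisted
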